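/- Fix integers k ≥ 1, s ≥ k+2, T ≥ 1 and reals w_I, w_J > 0, and let R be the inner restriction chain on {0,1}^{k+1} with these parameters. Set D̃ = 2·w_J + T·w_I·(2^{k+1} − 2) and define the probability distribution π on {0,1}^{k+1} by π(x) = w_J/D̃ if x is the all-zeros or all-ones string, and π(x) = T·w_I/D̃ otherwise. Then R is reversible with respect to π, i.e., π(x)·R[x,y] = π(y)·R[y,x] for all x, y; in particular π is a stationary distribution of R: πᵀR = πᵀ. -/

import Mathlib

open Matrix Finset BigOperators Kronecker

noncomputable def eigs {α : Type*} [Fintype α] [DecidableEq α] (M : Matrix α α ℝ) : Multiset ℝ :=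
  M.charpoly.roots

noncomputable def sortedEigs {α : Type*} [Fintype α] [DecidableEq α] (M : Matrix α α ℝ) : List ℝ :=
  (eigs M).sort (· ≤ ·)

noncomputable def secondEig {α : Type*} [Fintype α] [DecidableEq α] (M : Matrix α α ℝ) : ℝ :=
  (sortedEigs M).getD (Fintype.card α - 2) 0

noncomputable def minEig {α : Type*} [Fintype α] [DecidableEq α] (M : Matrix α α ℝ) : ℝ :=
  (sortedEigs M).getD 0 0

noncomputable def oneSidedGap {α : Type*} [Fintype α] [DecidableEq α] (M : Matrix α α ℝ) : ℝ :=
  1 - secondEig M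

noncomputable def twoSidedGap {α : Type*} [Fintype α] [DecidableEq α] (M : Matrix α α ℝ) : ℝ :=
  1 - max |secondEig M| |minEig M|

def RowStochastic {α : Type*} [Fintype α] (M : Matrix α α ℝ) : Prop :=
  (∀ i j, 0 ≤ M i j) ∧ ∀ i, ∑ j, M i j = 1

/-- Off-diagonal entries of the inner restriction chain on {0,1}^{k+1}. -/
noncomputable def innerROff (k s T : ℕ) (wI wJ : ℝ) :
    (Fin (k + 1) → Bool) → (Fin (k + 1) → Bool) → ℝ := fun x y =>
  if (Finset.univ.filter fun i => x i ≠ y i).card = 1 then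
    (if x = (fun _ => false) ∨ x = (fun _ => true) then
        wI / (((T : ℝ) * wI + wJ) * ((k : ℝ) + 1) * ((s : ℝ) - k))
     else if y = (fun _ => false) ∨ y = (fun _ => true) then
        wJ / (((T : ℝ) * wI + wJ) * T * ((k : ℝ) + 1) * ((s : ℝ) - k))
     else 1 / (2 * ((k : ℝ) + 1) * ((s : ℝ) - k)))
  else 0

/-- The inner restriction chain R on {0,1}^{k+1}: off-diagonal entries given by
`innerROff`, and each diagonal entry is 1 minus the sum of the off-diagonal entries
of its row.  (Note `innerROff k s T wI wJ x x = 0`.) -/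
noncomputable def innerR (k s T : ℕ) (wI wJ : ℝ) :
    Matrix (Fin (k + 1) → Bool) (Fin (k + 1) → Bool) ℝ :=
  fun x y =>
    if x = y then 1 - ∑ z, innerROff k s T wI wJ x z
    else innerROff k s T wI wJ x y

/-!
Detailed balance is checked edge by edge. Along an edge between two non-constant strings the
rate is the same in both directions and so is the weight. Along an edge from a constant string
(weight `w_J`) to a non-constant one (weight `T·w_I`) the two rates are `w_I/(D(k+1)(s-k))` and
`w_J/(D·T·(k+1)(s-k))`, and the factor `T` cancels. Since every row of `R` sums to 1, detailed
balance implies stationarity.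
-/

section DetailedBalance

variable {α : Type*} [Fintype α]

theorem sum_ite_eq_one_sub_sum [DecidableEq α] (f : α → ℝ) (x : α) (hx : f x = 0) :
    ∑ y, (if x = y then 1 - ∑ z, f z else f y) = 1 := by
  have hsplit : ∀ y, (if x = y then 1 - ∑ z, f z else f y) =
      f y + if x = y then 1 - ∑ z, f z else 0 := by
    intro y
    split_ifs with h
    · simp [← h, hx]
    · simp
  simp only [hsplit, Finset.sum_add_distrib, Finset.sum_ite_eq, Finset.mem_univ, if_true]
  ring

theorem sum_mul_eq_of_detailed_balance (M : Matrix α α ℝ) (π : α → ℝ)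
    (hrev : ∀ x y, π x * M x y = π y * M y x) (hrow : ∀ x, ∑ y, M x y = 1) (y : α) :
    ∑ x, π x * M x y = π y := by
  simp only [hrev _ y, ← Finset.mul_sum, hrow, mul_one]

end DetailedBalance

section InnerRestrictionChain

variable {k s T : ℕ} {wI wJ : ℝ}

/-- The stationary distribution before normalisation by `D̃`. -/
noncomputable def innerWeight (k T : ℕ) (wI wJ : ℝ) (x : Fin (k + 1) → Bool) : ℝ :=
  if x = (fun _ => false) ∨ x = (fun _ => true) then wJ else T * wI

theorem innerROff_eq (x y : Fin (k + 1) → Bool) : innerROff k s T wI wJ x y =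
    if hammingDist x y = 1 then
      (if x = (fun _ => false) ∨ x = (fun _ => true) then
          wI / (((T : ℝ) * wI + wJ) * ((k : ℝ) + 1) * ((s : ℝ) - k))
       else if y = (fun _ => false) ∨ y = (fun _ => true) then
          wJ / (((T : ℝ) * wI + wJ) * T * ((k : ℝ) + 1) * ((s : ℝ) - k))
       else 1 / (2 * ((k : ℝ) + 1) * ((s : ℝ) - k)))
    else 0 :=
  rfl

theorem innerROff_self (x : Fin (k + 1) → Bool) : innerROff k s T wI wJ x x = 0 := by
  simp [innerROff_eq]

theorem innerR_row_sum (x : Fin (k + 1) → Bool) : ∑ y, innerR k s T wI wJ x y = 1 := by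
  simp only [innerR]
  exact sum_ite_eq_one_sub_sum _ x (innerROff_self x)

theorem innerWeight_mul_innerROff (hT : T ≠ 0) (x y : Fin (k + 1) → Bool) :
    innerWeight k T wI wJ x * innerROff k s T wI wJ x y =
      innerWeight k T wI wJ y * innerROff k s T wI wJ y x := by
  have hT' : (T : ℝ) ≠ 0 := Nat.cast_ne_zero.mpr hT
  -- Valid for all `d c e`: if `d * c * e = 0`, both sides are `0` under `x / 0 = 0`.
  have hcancel : ∀ d c e : ℝ, T * wI * (wJ / (d * T * c * e)) = wJ * (wI / (d * c * e)) := by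
    intro d c e
    rw [mul_right_comm d, mul_right_comm (d * c), ← div_div, mul_div_assoc', mul_assoc,
      mul_div_cancel_left₀ _ hT']
    ring
  simp only [innerWeight, innerROff_eq, hammingDist_comm y x]
  split_ifs <;> (try simp only [hcancel]) <;> ring

theorem innerWeight_mul_innerR (hT : T ≠ 0) (x y : Fin (k + 1) → Bool) :
    innerWeight k T wI wJ x * innerR k s T wI wJ x y =
      innerWeight k T wI wJ y * innerR k s T wI wJ y x := by
  obtain rfl | hxy := eq_or_ne x y
  · rfl
  · simp only [innerR, if_neg hxy, if_neg hxy.symm]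
    exact innerWeight_mul_innerROff hT x y

end InnerRestrictionChain

theorem stmt_13_general (k s T : ℕ) (hT : 1 ≤ T)
    (wI wJ : ℝ)
    (Dt : ℝ)
    (pi : (Fin (k + 1) → Bool) → ℝ)
    (hpi : ∀ x, pi x =
      if x = (fun _ => false) ∨ x = (fun _ => true) then wJ / Dt else (T : ℝ) * wI / Dt) :
    (∀ x y, pi x * innerR k s T wI wJ x y = pi y * innerR k s T wI wJ y x) ∧
    (∀ y, ∑ x, pi x * innerR k s T wI wJ x y = pi y) := by
  have hpi_eq : ∀ x, pi x = innerWeight k T wI wJ x / Dt := by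
    intro x
    rw [hpi, innerWeight]
    split_ifs <;> rfl
  have hrev : ∀ x y, pi x * innerR k s T wI wJ x y = pi y * innerR k s T wI wJ y x := by
    intro x y
    rw [hpi_eq, hpi_eq, div_mul_eq_mul_div, div_mul_eq_mul_div,
      innerWeight_mul_innerR (by omega) x y]
  exact ⟨hrev, sum_mul_eq_of_detailed_balance _ pi hrev innerR_row_sum⟩

/-- the inner restriction chain is reversible with respect to the
distribution giving mass w_J/D̃ to the two constant strings and T·w_I/D̃ to all other
strings; in particular this distribution is stationary. -/
theorem stmt_13 (k s T : ℕ) (hk : 1 ≤ k) (hs : k + 2 ≤ s) (hT : 1 ≤ T)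
    (wI wJ : ℝ) (hwI : 0 < wI) (hwJ : 0 < wJ)
    (Dt : ℝ) (hDt : Dt = 2 * wJ + (T : ℝ) * wI * ((2 : ℝ) ^ (k + 1) - 2))
    (pi : (Fin (k + 1) → Bool) → ℝ)
    (hpi : ∀ x, pi x =
      if x = (fun _ => false) ∨ x = (fun _ => true) then wJ / Dt else (T : ℝ) * wI / Dt) :
    (∀ x y, pi x * innerR k s T wI wJ x y = pi y * innerR k s T wI wJ y x) ∧
    (∀ y, ∑ x, pi x * innerR k s T wI wJ x y = pi y) :=
  stmt_13_general k s T hT wI wJ Dt pi hpi
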